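/- Let F be an optimal Steiner forest of a two-player network design game with P_1∩P_2 a nonempty common subpath, let ξ be a pushed-to-the-left optimal solution of LP(F) in which some edge of F is not completely paid, and let e be the first edge of F (with respect to the ordering of the edges of F) that is not completely paid. Then e does not lie in the left part of F, i.e. ord(e) > ℓ_1+ℓ_2. -/

import Mathlib

/-!
Suppose an edge `e` on the private left part `L` of the path `P = L ++ M ++ R` of one player is
not completely paid. If that player's own edges are priced at her shares `ξ` and all other edges
at their costs `c`, her Nash constraints say that `P` is a shortest walk. Because `ξ` is optimal
and pushed to the left, there is a shortest walk avoiding `e`, and one through each middle edge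
with positive share: otherwise raising the share on `e`, or shifting share from that middle edge
to `e`, would stay feasible. Splicing at the first middle edge with positive share gives a
shortest walk `ρ` avoiding `e` through every middle edge with positive share. Replacing the edges
of `P` that lie neither on `ρ` nor on `M` by `ρ` still connects both terminal pairs, and it is
strictly cheaper: the new edges cost at most the shares of the removed ones, and `e` costs more
than its share. This contradicts the optimality of the Steiner forest.
-/

namespace NDG

variable {V : Type*} [DecidableEq V]

/-- Total cost of a finite set of edges. -/
def cost (c : Sym2 V → ℝ) (F : Finset (Sym2 V)) : ℝ := ∑ e ∈ F, c e

/-- A Steiner forest: an acyclic set of edges of `G` connecting both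
terminal pairs. -/
def IsSteinerForest (G : SimpleGraph V) (s₁ t₁ s₂ t₂ : V) (F : Finset (Sym2 V)) : Prop :=
  (↑F ⊆ G.edgeSet) ∧
  (SimpleGraph.fromEdgeSet (↑F : Set (Sym2 V))).IsAcyclic ∧
  (∃ p : G.Walk s₁ t₁, p.IsPath ∧ ∀ e ∈ p.edges, e ∈ F) ∧
  (∃ p : G.Walk s₂ t₂, p.IsPath ∧ ∀ e ∈ p.edges, e ∈ F)

/-- An optimal Steiner forest: one of minimum total cost. -/
def IsOptimalSteinerForest (G : SimpleGraph V) (s₁ t₁ s₂ t₂ : V) (c : Sym2 V → ℝ)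
    (F : Finset (Sym2 V)) : Prop :=
  IsSteinerForest G s₁ t₁ s₂ t₂ F ∧
  ∀ F', IsSteinerForest G s₁ t₁ s₂ t₂ F' → cost c F ≤ cost c F'

/-- A strategy of a player: a simple path between her terminals. -/
abbrev Strat (G : SimpleGraph V) (s t : V) := {p : G.Walk s t // p.IsPath}

/-- A cost sharing protocol: cost shares for both players on every edge,
depending on the chosen strategy profile. -/
abbrev Protocol (G : SimpleGraph V) (s₁ t₁ s₂ t₂ : V) :=
  Strat G s₁ t₁ → Strat G s₂ t₂ → Fin 2 → Sym2 V → ℝ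

/-- The set of players using edge `e` in the profile `(P₁, P₂)`. -/
def usedBy {G : SimpleGraph V} {s₁ t₁ s₂ t₂ : V}
    (P₁ : Strat G s₁ t₁) (P₂ : Strat G s₂ t₂) (e : Sym2 V) : Finset (Fin 2) :=
  (if e ∈ P₁.1.edges then {0} else ∅) ∪ (if e ∈ P₂.1.edges then {1} else ∅)

/-- The total cost player 1 pays. -/
def cost₁ {G : SimpleGraph V} {s₁ t₁ s₂ t₂ : V} (Ξ : Protocol G s₁ t₁ s₂ t₂)
    (P₁ : Strat G s₁ t₁) (P₂ : Strat G s₂ t₂) : ℝ :=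
  ∑ e ∈ P₁.1.edges.toFinset, Ξ P₁ P₂ 0 e

/-- The total cost player 2 pays. -/
def cost₂ {G : SimpleGraph V} {s₁ t₁ s₂ t₂ : V} (Ξ : Protocol G s₁ t₁ s₂ t₂)
    (P₁ : Strat G s₁ t₁) (P₂ : Strat G s₂ t₂) : ℝ :=
  ∑ e ∈ P₂.1.edges.toFinset, Ξ P₁ P₂ 1 e

/-- Pure Nash equilibrium of the two-player game induced by the protocol `Ξ`. -/
def IsPNE {G : SimpleGraph V} {s₁ t₁ s₂ t₂ : V} (Ξ : Protocol G s₁ t₁ s₂ t₂)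
    (P₁ : Strat G s₁ t₁) (P₂ : Strat G s₂ t₂) : Prop :=
  (∀ Q₁, cost₁ Ξ P₁ P₂ ≤ cost₁ Ξ Q₁ P₂) ∧ (∀ Q₂, cost₂ Ξ P₁ P₂ ≤ cost₂ Ξ P₁ Q₂)

/-- A separable cost sharing protocol: nonnegative, budget-balanced, stable and
separable (cost shares on an edge depend only on the set of players using it). -/
structure IsSeparable {G : SimpleGraph V} {s₁ t₁ s₂ t₂ : V} (c : Sym2 V → ℝ)
    (Ξ : Protocol G s₁ t₁ s₂ t₂) : Prop where
  nonneg : ∀ P₁ P₂ i e, 0 ≤ Ξ P₁ P₂ i e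
  budget : ∀ P₁ P₂ e, (usedBy P₁ P₂ e).Nonempty →
    ∑ i ∈ usedBy P₁ P₂ e, Ξ P₁ P₂ i e = c e
  stable : ∃ P₁ P₂, IsPNE Ξ P₁ P₂
  separable : ∀ P₁ P₂ Q₁ Q₂ e, usedBy P₁ P₂ e = usedBy Q₁ Q₂ e →
    ∀ i, Ξ P₁ P₂ i e = Ξ Q₁ Q₂ i e

/-- A Steiner forest `F` is enforceable if the profile of the unique paths of
the two players inside `F` is a pure Nash equilibrium of the game induced by
some separable cost sharing protocol. -/
def Enforceable (G : SimpleGraph V) (s₁ t₁ s₂ t₂ : V) (c : Sym2 V → ℝ)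
    (F : Finset (Sym2 V)) : Prop :=
  ∃ (P₁ : Strat G s₁ t₁) (P₂ : Strat G s₂ t₂),
    (∀ e ∈ P₁.1.edges, e ∈ F) ∧ (∀ e ∈ P₂.1.edges, e ∈ F) ∧
    (∀ Q₁ : Strat G s₁ t₁, (∀ e ∈ Q₁.1.edges, e ∈ F) → Q₁ = P₁) ∧
    (∀ Q₂ : Strat G s₂ t₂, (∀ e ∈ Q₂.1.edges, e ∈ F) → Q₂ = P₂) ∧
    ∃ Ξ : Protocol G s₁ t₁ s₂ t₂, IsSeparable c Ξ ∧ IsPNE Ξ P₁ P₂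

/-- `(G,(s₁,t₁),(s₂,t₂))` is efficient: for every nonnegative cost function
some optimal Steiner forest is enforceable (the PoS is 1). -/
def Efficient (G : SimpleGraph V) (s₁ t₁ s₂ t₂ : V) : Prop :=
  ∀ c : Sym2 V → ℝ, (∀ e, 0 ≤ c e) →
    ∃ F, IsOptimalSteinerForest G s₁ t₁ s₂ t₂ c F ∧ Enforceable G s₁ t₁ s₂ t₂ c F

/-- `(G,(s₁,t₁),(s₂,t₂))` is strongly efficient: for every nonnegative cost
function every optimal Steiner forest is enforceable. -/
def StronglyEfficient (G : SimpleGraph V) (s₁ t₁ s₂ t₂ : V) : Prop :=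
  ∀ c : Sym2 V → ℝ, (∀ e, 0 ≤ c e) →
    ∀ F, IsOptimalSteinerForest G s₁ t₁ s₂ t₂ c F → Enforceable G s₁ t₁ s₂ t₂ c F

/-- Total cost of (the edges of) a walk. -/
def walkCost {G : SimpleGraph V} (c : Sym2 V → ℝ) {y z : V} (q : G.Walk y z) : ℝ :=
  ∑ e ∈ q.edges.toFinset, c e

section LP

variable (G : SimpleGraph V) {s₁ t₁ s₂ t₂ : V} (c : Sym2 V → ℝ)

/-- Feasibility for LP(F), where `F` consists of the edges of `P₁` and `P₂`:
nonnegative cost shares, supported on the respective path, capacity constraints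
on every edge of `F`, and the Nash constraints for all alternative paths. -/
def Feasible2 (P₁ : G.Walk s₁ t₁) (P₂ : G.Walk s₂ t₂) (ξ₁ ξ₂ : Sym2 V → ℝ) : Prop :=
  (∀ e, 0 ≤ ξ₁ e) ∧ (∀ e, 0 ≤ ξ₂ e) ∧
  (∀ e, e ∉ P₁.edges → ξ₁ e = 0) ∧ (∀ e, e ∉ P₂.edges → ξ₂ e = 0) ∧
  (∀ e ∈ P₁.edges.toFinset ∪ P₂.edges.toFinset, ξ₁ e + ξ₂ e ≤ c e) ∧
  (∀ q : G.Walk s₁ t₁, q.IsPath →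
    ∑ e ∈ P₁.edges.toFinset \ q.edges.toFinset, ξ₁ e ≤
      ∑ e ∈ q.edges.toFinset \ P₁.edges.toFinset, c e) ∧
  (∀ q : G.Walk s₂ t₂, q.IsPath →
    ∑ e ∈ P₂.edges.toFinset \ q.edges.toFinset, ξ₂ e ≤
      ∑ e ∈ q.edges.toFinset \ P₂.edges.toFinset, c e)

/-- Objective function of LP(F). -/
def Obj2 (P₁ : G.Walk s₁ t₁) (P₂ : G.Walk s₂ t₂) (ξ₁ ξ₂ : Sym2 V → ℝ) : ℝ :=
  ∑ e ∈ P₁.edges.toFinset, ξ₁ e + ∑ e ∈ P₂.edges.toFinset, ξ₂ e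

/-- Optimal solutions of LP(F). -/
def Optimal2 (P₁ : G.Walk s₁ t₁) (P₂ : G.Walk s₂ t₂) (ξ₁ ξ₂ : Sym2 V → ℝ) : Prop :=
  Feasible2 G c P₁ P₂ ξ₁ ξ₂ ∧
  ∀ η₁ η₂, Feasible2 G c P₁ P₂ η₁ η₂ → Obj2 G P₁ P₂ η₁ η₂ ≤ Obj2 G P₁ P₂ ξ₁ ξ₂

/-- Edge `e` is completely paid. -/
def Paid (ξ₁ ξ₂ : Sym2 V → ℝ) (e : Sym2 V) : Prop := ξ₁ e + ξ₂ e = c e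

/-- Increase the cost share on `e` by `ε` and decrease it on `f` by `ε`. -/
def pushFun (ξ : Sym2 V → ℝ) (e f : Sym2 V) (ε : ℝ) : Sym2 V → ℝ :=
  fun g => if g = e then ξ g + ε else if g = f then ξ g - ε else ξ g

/-- The ordering of the edges of `F`: first the `ℓ₁` edges of `P₁` from `s₁` to
the middle part, then the `ℓ₂` edges of `P₂` from `s₂` to the middle part, then
the `m` middle edges from left to right, then the `r₁` edges towards `t₁`, then
the `r₂` edges towards `t₂`. -/
def ordList {a b : V} (L₁ : G.Walk s₁ a) (M : G.Walk a b) (R₁ : G.Walk b t₁)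
    (L₂ : G.Walk s₂ a) (R₂ : G.Walk b t₂) : List (Sym2 V) :=
  L₁.edges ++ L₂.edges ++ M.edges ++ R₁.edges ++ R₂.edges

/-- `k` is the (0-based) position of the first edge of `F` (w.r.t. the
ordering `ord`) which is not completely paid. -/
def FirstUnpaid (ord : List (Sym2 V)) (ξ₁ ξ₂ : Sym2 V → ℝ) (k : ℕ) : Prop :=
  k < ord.length ∧ (∀ e, ord[k]? = some e → ¬ Paid c ξ₁ ξ₂ e) ∧
  ∀ j, j < k → ∀ e, ord[j]? = some e → Paid c ξ₁ ξ₂ e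

/-- The solution `(ξ₁, ξ₂)` is pushed to the left: no push operation (moving
an `ε > 0` of a player's cost share from an edge of higher order to an edge of
lower order) yields a feasible solution of LP(F). -/
def PushedLeft (P₁ : G.Walk s₁ t₁) (P₂ : G.Walk s₂ t₂) (ord : List (Sym2 V))
    (ξ₁ ξ₂ : Sym2 V → ℝ) : Prop :=
  (∀ e ∈ P₁.edges, ∀ f ∈ P₁.edges, ord.idxOf e < ord.idxOf f →
    ∀ ε : ℝ, 0 < ε → ¬ Feasible2 G c P₁ P₂ (pushFun ξ₁ e f ε) ξ₂) ∧
  (∀ e ∈ P₂.edges, ∀ f ∈ P₂.edges, ord.idxOf e < ord.idxOf f →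
    ∀ ε : ℝ, 0 < ε → ¬ Feasible2 G c P₁ P₂ ξ₁ (pushFun ξ₂ e f ε))

/-- Feasibility of the operation CHANGE(j,i) for the middle edges `ej`, `ei`:
increasing `ξ₂` on `ei` and `ξ₁` on `ej` while simultaneously decreasing `ξ₂`
on `ej` and `ξ₁` on `ei` by some common positive amount stays feasible. -/
def ChangeFeasible (P₁ : G.Walk s₁ t₁) (P₂ : G.Walk s₂ t₂) (ξ₁ ξ₂ : Sym2 V → ℝ)
    (ej ei : Sym2 V) : Prop :=
  ∃ ε : ℝ, 0 < ε ∧ Feasible2 G c P₁ P₂ (pushFun ξ₁ ej ei ε) (pushFun ξ₂ ei ej ε)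

/-- Property (2M): the sum of cost shares of Player 2 is maximal among all
optimal solutions of LP(F) whose first not-completely-paid edge is the edge of
order `k`. -/
def Max2 (P₁ : G.Walk s₁ t₁) (P₂ : G.Walk s₂ t₂) (ord : List (Sym2 V))
    (ξ₂ : Sym2 V → ℝ) (k : ℕ) : Prop :=
  ∀ η₁ η₂, Optimal2 G c P₁ P₂ η₁ η₂ → FirstUnpaid c ord η₁ η₂ k →
    ∑ e ∈ P₂.edges.toFinset, η₂ e ≤ ∑ e ∈ P₂.edges.toFinset, ξ₂ e

/-- Property (NC): CHANGE(j,i) is not feasible for any pair `j < i` of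
middle-part positions (the middle part occupies positions `ℓ, …, ℓ+m-1`). -/
def NoChange (P₁ : G.Walk s₁ t₁) (P₂ : G.Walk s₂ t₂) (ord : List (Sym2 V))
    (ξ₁ ξ₂ : Sym2 V → ℝ) (ℓ m : ℕ) : Prop :=
  ∀ j i : ℕ, ℓ ≤ j → j < i → i < ℓ + m →
    ∀ ej ei : Sym2 V, ord[j]? = some ej → ord[i]? = some ei →
      ¬ ChangeFeasible G c P₁ P₂ ξ₁ ξ₂ ej ei

/-- The solution is maximized for Player 2: properties (2M) and (NC). -/
def Maximized2 (P₁ : G.Walk s₁ t₁) (P₂ : G.Walk s₂ t₂) (ord : List (Sym2 V))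
    (ξ₁ ξ₂ : Sym2 V → ℝ) (k ℓ m : ℕ) : Prop :=
  Max2 G c P₁ P₂ ord ξ₂ k ∧ NoChange G c P₁ P₂ ord ξ₁ ξ₂ ℓ m

end LP

end NDG

namespace NDG

open SimpleGraph

lemma exists_pos_le_of_finite {ι : Type*} [Finite ι] {p : ι → Prop} {g : ι → ℝ}
    (hg : ∀ i, p i → 0 < g i) {δ : ℝ} (hδ : 0 < δ) :
    ∃ ε, 0 < ε ∧ ε ≤ δ ∧ ∀ i, p i → ε ≤ g i := by
  obtain ⟨x, hx⟩ := Finite.exists_min fun o : Option {i // p i} => o.elim δ fun i => g i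
  refine ⟨_, ?_, hx none, fun i hi => hx (some ⟨i, hi⟩)⟩
  cases x with
  | none => exact hδ
  | some i => exact hg i i.2

lemma idxOf_append_lt_of_mem_of_notMem {α : Type*} [BEq α] [LawfulBEq α] {A B : List α}
    {x y : α} (hx : x ∈ A) (hy : y ∉ A) : (A ++ B).idxOf x < (A ++ B).idxOf y := by
  rw [List.idxOf_append_of_mem hx, List.idxOf_append_of_notMem hy]
  have := List.idxOf_lt_length_iff.2 hx
  omega

section Graphs

variable {V : Type*} {G : SimpleGraph V}

/-- Unlike `walkCost`, this counts repeated edges with multiplicity, which makes it additive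
under `Walk.append`. -/
def weight (w : Sym2 V → ℝ) {u v : V} (p : G.Walk u v) : ℝ := (p.edges.map w).sum

lemma weight_append (w : Sym2 V → ℝ) {u v x : V} (p : G.Walk u v) (q : G.Walk v x) :
    weight w (p.append q) = weight w p + weight w q := by
  simp [weight, Walk.edges_append]

lemma weight_bypass_le [DecidableEq V] {w : Sym2 V → ℝ} (hw : ∀ g, 0 ≤ w g) {u v : V}
    (p : G.Walk u v) : weight w p.bypass ≤ weight w p :=
  (p.edges_bypass_sublist_edges.map w).sum_le_sum fun _ h => by
    obtain ⟨g, -, rfl⟩ := List.mem_map.1 h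
    exact hw g

lemma sum_toFinset_le_weight [DecidableEq V] {w : Sym2 V → ℝ} (hw : ∀ g, 0 ≤ w g) {u v : V}
    (p : G.Walk u v) : ∑ g ∈ p.edges.toFinset, w g ≤ weight w p := by
  have hdedup : p.edges.dedup.toFinset = p.edges.toFinset := by ext; simp
  rw [← hdedup, List.sum_toFinset w (List.nodup_dedup _)]
  exact ((List.dedup_sublist _).map w).sum_le_sum fun _ h => by
    obtain ⟨g, -, rfl⟩ := List.mem_map.1 h
    exact hw g

lemma weight_eq_sum_toFinset [DecidableEq V] (w : Sym2 V → ℝ) {u v : V} {p : G.Walk u v}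
    (hp : p.IsPath) : weight w p = ∑ g ∈ p.edges.toFinset, w g :=
  (List.sum_toFinset w hp.edges_nodup).symm

lemma notMem_edges_of_isPath_append {u v x : V} {p : G.Walk u v} {q : G.Walk v x}
    (h : (p.append q).IsPath) {g : Sym2 V} (hg : g ∈ p.edges) : g ∉ q.edges := by
  have := h.edges_nodup
  rw [Walk.edges_append, List.nodup_append] at this
  exact fun hq => this.2.2 g hg g hq rfl

lemma exists_split_at_first_edge (p : Sym2 V → Prop) {x y : V} (m : G.Walk x y)
    (h : ∃ g ∈ m.edges, p g) :
    ∃ (u u' : V) (hadj : G.Adj u u') (m₁ : G.Walk x u) (m₂ : G.Walk u' y),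
      m = m₁.append (.cons hadj m₂) ∧ p s(u, u') ∧ ∀ g ∈ m₁.edges, ¬ p g := by
  induction m with
  | nil => simp at h
  | @cons x v y hadj m ih =>
    by_cases hp : p s(x, v)
    · exact ⟨x, v, hadj, .nil, m, rfl, hp, by simp⟩
    · obtain ⟨u, u', hadj', m₁, m₂, rfl, hpu, hm₁⟩ := ih (by simpa [hp] using h)
      exact ⟨u, u', hadj', .cons hadj m₁, m₂, rfl, hpu, by simpa [hp] using hm₁⟩

lemma weight_takeUntil_append_le [DecidableEq V] {w : Sym2 V → ℝ} {s u t : V}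
    (A : G.Walk s u) (B : G.Walk u t)
    (hmin : ∀ ρ : G.Walk s t, weight w (A.append B) ≤ weight w ρ)
    (q : G.Walk s t) (hu : u ∈ q.support) :
    weight w ((q.takeUntil u hu).append B) ≤ weight w q := by
  have hsplit := weight_append w (q.takeUntil u hu) (q.dropUntil u hu)
  rw [q.take_spec hu] at hsplit
  have hdrop := hmin (A.append (q.dropUntil u hu))
  simp only [weight_append] at hdrop ⊢
  linarith

lemma exists_avoiding_covering_weight_le {w : Sym2 V → ℝ} {p : Sym2 V → Prop} {e : Sym2 V}
    {s a b t : V} (L : G.Walk s a) (M : G.Walk a b) (R : G.Walk b t)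
    (hmin : ∀ ρ : G.Walk s t, weight w ((L.append M).append R) ≤ weight w ρ)
    (heM : e ∉ M.edges) (heR : e ∉ R.edges)
    (havoid : ∃ q : G.Walk s t, e ∉ q.edges ∧ weight w q ≤ weight w ((L.append M).append R))
    (hthrough : ∀ g ∈ M.edges, p g → ∃ q : G.Walk s t,
      e ∉ q.edges ∧ g ∈ q.edges ∧ weight w q ≤ weight w ((L.append M).append R)) :
    ∃ ρ : G.Walk s t, weight w ρ ≤ weight w ((L.append M).append R) ∧ e ∉ ρ.edges ∧
      ∀ g ∈ M.edges, p g → g ∈ ρ.edges := by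
  classical
  by_cases hM : ∃ g ∈ M.edges, p g
  · obtain ⟨u, u', hadj, m₁, m₂, rfl, hpu, hm₁⟩ := exists_split_at_first_edge p M hM
    obtain ⟨q, heq, hgq, hqw⟩ := hthrough _ (by simp) hpu
    have hu : u ∈ q.support := q.fst_mem_support_of_mem_edges hgq
    have hP : (L.append (m₁.append (.cons hadj m₂))).append R =
        (L.append m₁).append ((Walk.cons hadj m₂).append R) := by
      simp only [Walk.append_assoc]
    refine ⟨(q.takeUntil u hu).append ((Walk.cons hadj m₂).append R), ?_, ?_, ?_⟩
    · rw [hP] at hmin hqw ⊢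
      exact (weight_takeUntil_append_le _ _ hmin q hu).trans hqw
    · simp only [Walk.edges_append, List.mem_append, not_or]
      refine ⟨fun h => heq (q.edges_takeUntil_subset_edges hu h), fun h => heM ?_, heR⟩
      rw [Walk.edges_append]
      exact List.mem_append_right _ h
    · intro g hgM hg
      rw [Walk.edges_append, List.mem_append] at hgM
      have hg₂ : g ∈ (Walk.cons hadj m₂).edges := hgM.resolve_left fun h => hm₁ g h hg
      simp only [Walk.edges_append, List.mem_append]
      exact Or.inr (Or.inl hg₂)
  · obtain ⟨q, heq, hqw⟩ := havoid
    exact ⟨q, hqw, heq, fun g hgM hg => (hM ⟨g, hgM, hg⟩).elim⟩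

lemma reachable_fromEdgeSet_of_edges_subset {S : Set (Sym2 V)} {u v : V} (p : G.Walk u v)
    (hp : ∀ g ∈ p.edges, g ∈ S) : (fromEdgeSet S).Reachable u v :=
  ⟨p.transfer _ fun g hg => by
    rw [edgeSet_fromEdgeSet]
    exact ⟨hp g hg, G.not_isDiag_of_mem_edgeSet (p.edges_subset_edgeSet hg)⟩⟩

lemma exists_isPath_of_reachable {T : SimpleGraph V} (hTG : T ≤ G) {u v : V}
    (h : T.Reachable u v) : ∃ p : G.Walk u v, p.IsPath ∧ ∀ g ∈ p.edges, g ∈ T.edgeSet := by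
  classical
  obtain ⟨r⟩ := h
  exact ⟨(r.toPath : T.Walk u v).mapLe hTG, by simp [(r.toPath).2],
    fun g hg => ((r.toPath : T.Walk u v).edges_subset_edgeSet (by simpa using hg))⟩

variable {s₁ t₁ s₂ t₂ : V} {c : Sym2 V → ℝ}

/-- A spanning forest of the graph spanned by `S` is a Steiner forest. -/
lemma exists_isSteinerForest_subset {S : Finset (Sym2 V)} (hS : ↑S ⊆ G.edgeSet)
    (h₁ : ∃ p : G.Walk s₁ t₁, ∀ g ∈ p.edges, g ∈ S)
    (h₂ : ∃ p : G.Walk s₂ t₂, ∀ g ∈ p.edges, g ∈ S) :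
    ∃ F ⊆ S, IsSteinerForest G s₁ t₁ s₂ t₂ F := by
  classical
  obtain ⟨T, hTS, hT, hreach⟩ :=
    (fromEdgeSet (S : Set (Sym2 V))).exists_isAcyclic_reachable_eq_le
  have hTS' : T.edgeSet ⊆ S := fun g hg => by
    have := edgeSet_subset_edgeSet.2 hTS hg
    rw [edgeSet_fromEdgeSet] at this
    exact this.1
  have hTG : T ≤ G := edgeSet_subset_edgeSet.1 (hTS'.trans hS)
  have hF : ((S.filter (· ∈ T.edgeSet) : Finset (Sym2 V)) : Set (Sym2 V)) = T.edgeSet := by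
    ext g; simpa using fun hg => hTS' hg
  have path_in_T : ∀ {u v : V}, (∃ p : G.Walk u v, ∀ g ∈ p.edges, g ∈ S) →
      ∃ p : G.Walk u v, p.IsPath ∧ ∀ g ∈ p.edges, g ∈ S.filter (· ∈ T.edgeSet) := by
    rintro u v ⟨p, hp⟩
    obtain ⟨q, hq, hqT⟩ := exists_isPath_of_reachable hTG
      (hreach ▸ reachable_fromEdgeSet_of_edges_subset p hp)
    exact ⟨q, hq, fun g hg => by simpa [← Finset.mem_coe, hF] using hqT g hg⟩
  refine ⟨_, Finset.filter_subset _ _, ?_, ?_, path_in_T h₁, path_in_T h₂⟩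
  · rw [hF]; exact hTS'.trans hS
  · rwa [hF, fromEdgeSet_edgeSet]

lemma IsOptimalSteinerForest.swap {F : Finset (Sym2 V)}
    (hF : IsOptimalSteinerForest G s₁ t₁ s₂ t₂ c F) : IsOptimalSteinerForest G s₂ t₂ s₁ t₁ c F :=
  ⟨⟨hF.1.1, hF.1.2.1, hF.1.2.2.2, hF.1.2.2.1⟩,
    fun F' hF' => hF.2 F' ⟨hF'.1, hF'.2.1, hF'.2.2.2, hF'.2.2.1⟩⟩

lemma IsOptimalSteinerForest.cost_le (hc : ∀ g, 0 ≤ c g) {F S : Finset (Sym2 V)}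
    (hF : IsOptimalSteinerForest G s₁ t₁ s₂ t₂ c F) (hS : ↑S ⊆ G.edgeSet)
    (h₁ : ∃ p : G.Walk s₁ t₁, ∀ g ∈ p.edges, g ∈ S)
    (h₂ : ∃ p : G.Walk s₂ t₂, ∀ g ∈ p.edges, g ∈ S) : cost c F ≤ cost c S := by
  obtain ⟨F', hF'S, hF'⟩ := exists_isSteinerForest_subset hS h₁ h₂
  exact (hF.2 F' hF').trans (Finset.sum_le_sum_of_subset_of_nonneg hF'S fun g _ _ => hc g)

end Graphs

section LP

variable {V : Type*} [DecidableEq V] {G : SimpleGraph V} {c : Sym2 V → ℝ}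
  {s t s' t' : V} {P : G.Walk s t} {Q : G.Walk s' t'} {ξ ξ' : Sym2 V → ℝ}

lemma Feasible2.swap (h : Feasible2 G c P Q ξ ξ') : Feasible2 G c Q P ξ' ξ := by
  obtain ⟨h₁, h₂, h₃, h₄, hcap, h₆, h₇⟩ := h
  refine ⟨h₂, h₁, h₄, h₃, fun g hg => ?_, h₇, h₆⟩
  rw [add_comm]
  exact hcap g (by rwa [Finset.union_comm] at hg)

lemma Optimal2.swap (h : Optimal2 G c P Q ξ ξ') : Optimal2 G c Q P ξ' ξ :=
  ⟨h.1.swap, fun η' η hη => by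
    have := h.2 η η' hη.swap
    simp only [Obj2] at this ⊢
    linarith⟩

lemma PushedLeft.swap {ord : List (Sym2 V)} (h : PushedLeft G c P Q ord ξ ξ') :
    PushedLeft G c Q P ord ξ' ξ :=
  ⟨fun e he f hf hef ε hε hfeas => h.2 e he f hf hef ε hε hfeas.swap,
    fun e he f hf hef ε hε hfeas => h.1 e he f hf hef ε hε hfeas.swap⟩

lemma sum_pushFun (ξ : Sym2 V → ℝ) (e f : Sym2 V) (ε : ℝ) (S : Finset (Sym2 V)) :
    ∑ g ∈ S, pushFun ξ e f ε g =
      ∑ g ∈ S, ξ g + (if e ∈ S then ε else 0) - (if f ∈ S ∧ f ≠ e then ε else 0) := by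
  by_cases hfe : f = e
  · subst hfe
    have : ∀ g, pushFun ξ f f ε g = ξ g + if g = f then ε else 0 := by
      intro g; unfold pushFun; split_ifs <;> simp
    simp [this, Finset.sum_add_distrib]
  · have : ∀ g, pushFun ξ e f ε g = ξ g + (if g = e then ε else 0) - if g = f then ε else 0 := by
      intro g; unfold pushFun; split_ifs <;> simp_all
    simp [this, Finset.sum_add_distrib, Finset.sum_sub_distrib, hfe]

lemma Feasible2.pushFun_left (h : Feasible2 G c P Q ξ ξ') {e f : Sym2 V} (he : e ∈ P.edges)
    (hf : f ∈ P.edges) {ε : ℝ} (hε : 0 ≤ ε) (hcap : ξ e + ξ' e + ε ≤ c e)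
    (hfε : f ≠ e → ε ≤ ξ f)
    (hslack : ∀ q : G.Walk s t, q.IsPath → e ∉ q.edges → (f = e ∨ f ∈ q.edges) →
      ∑ g ∈ P.edges.toFinset \ q.edges.toFinset, ξ g + ε ≤
        ∑ g ∈ q.edges.toFinset \ P.edges.toFinset, c g) :
    Feasible2 G c P Q (pushFun ξ e f ε) ξ' := by
  obtain ⟨hξ, hξ', hsupp, hsupp', hcapF, hNash, hNash'⟩ := h
  refine ⟨fun g => ?_, hξ', fun g hg => ?_, hsupp', fun g hg => ?_, fun q hq => ?_, hNash'⟩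
  · unfold pushFun
    split_ifs with h₁ h₂
    · linarith [hξ g]
    · subst h₂; linarith [hfε h₁]
    · exact hξ g
  · have h₁ : g ≠ e := fun h => hg (h ▸ he)
    have h₂ : g ≠ f := fun h => hg (h ▸ hf)
    simp [pushFun, h₁, h₂, hsupp g hg]
  · unfold pushFun
    split_ifs with h₁ h₂
    · subst h₁; linarith
    · linarith [hcapF g hg]
    · exact hcapF g hg
  · have hq' := hNash q hq
    rw [sum_pushFun]
    by_cases heq : e ∈ q.edges
    · rw [if_neg fun h => (Finset.mem_sdiff.1 h).2 (List.mem_toFinset.2 heq)]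
      split_ifs <;> linarith
    · rw [if_pos (Finset.mem_sdiff.2 ⟨List.mem_toFinset.2 he, by simpa using heq⟩)]
      split_ifs with hfq
      · linarith
      · have : f = e ∨ f ∈ q.edges := by
          by_contra! hn
          exact hfq ⟨Finset.mem_sdiff.2 ⟨List.mem_toFinset.2 hf, by simpa using hn.2⟩, hn.1⟩
        linarith [hslack q hq heq this]

/-- The Nash constraints of the player using `P` say exactly that `P` is a shortest
`s`-`t` walk for these edge costs. -/
def deviationCost (P : G.Walk s t) (ξ c : Sym2 V → ℝ) : Sym2 V → ℝ :=
  P.edges.toFinset.piecewise ξ c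

lemma deviationCost_nonneg (hξ : ∀ g, 0 ≤ ξ g) (hc : ∀ g, 0 ≤ c g) (g : Sym2 V) :
    0 ≤ deviationCost P ξ c g := by
  unfold deviationCost Finset.piecewise
  split_ifs
  exacts [hξ g, hc g]

lemma sum_deviationCost_sub_weight (hP : P.IsPath) {u v : V} (ρ : G.Walk u v) :
    ∑ g ∈ ρ.edges.toFinset, deviationCost P ξ c g - weight (deviationCost P ξ c) P =
      ∑ g ∈ ρ.edges.toFinset \ P.edges.toFinset, c g -
        ∑ g ∈ P.edges.toFinset \ ρ.edges.toFinset, ξ g := by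
  rw [weight_eq_sum_toFinset _ hP, ← Finset.sum_sdiff_sub_sum_sdiff]
  congr 1
  · exact Finset.sum_congr rfl fun g hg =>
      Finset.piecewise_eq_of_notMem _ _ _ (Finset.mem_sdiff.1 hg).2
  · exact Finset.sum_congr rfl fun g hg =>
      Finset.piecewise_eq_of_mem _ _ _ (Finset.mem_sdiff.1 hg).1

lemma Feasible2.weight_le (h : Feasible2 G c P Q ξ ξ') (hc : ∀ g, 0 ≤ c g) (hP : P.IsPath)
    (ρ : G.Walk s t) : weight (deviationCost P ξ c) P ≤ weight (deviationCost P ξ c) ρ := by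
  have hNash := h.2.2.2.2.2.1 ρ.bypass ρ.bypass_isPath
  have := sum_deviationCost_sub_weight (ξ := ξ) (c := c) hP ρ.bypass
  rw [← weight_eq_sum_toFinset _ ρ.bypass_isPath] at this
  linarith [weight_bypass_le (deviationCost_nonneg (P := P) h.1 hc) ρ]

/-- Otherwise, moving a little of the share on `f` to `e` (if `f = e`: raising the share on `e`)
would keep `(ξ, ξ')` feasible, contradicting that it is pushed to the left (resp. optimal). -/
lemma exists_avoiding_weight_le [Fintype V] (hLP : Optimal2 G c P Q ξ ξ')
    {ord : List (Sym2 V)} (hPL : PushedLeft G c P Q ord ξ ξ') (hP : P.IsPath)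
    {e f : Sym2 V} (he : e ∈ P.edges) (hunpaid : ξ e + ξ' e < c e) (hf : f ∈ P.edges)
    (hef : f = e ∨ 0 < ξ f ∧ ord.idxOf e < ord.idxOf f) :
    ∃ q : G.Walk s t, e ∉ q.edges ∧ (f = e ∨ f ∈ q.edges) ∧
      weight (deviationCost P ξ c) q ≤ weight (deviationCost P ξ c) P := by
  classical
  by_contra! hslack
  obtain ⟨δ, hδ, hδe, hδf⟩ : ∃ δ, 0 < δ ∧ ξ e + ξ' e + δ ≤ c e ∧ (f ≠ e → δ ≤ ξ f) := by
    rcases hef with rfl | ⟨hf0, -⟩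
    · exact ⟨c f - (ξ f + ξ' f), by linarith, by linarith, fun h => (h rfl).elim⟩
    · exact ⟨min (c e - (ξ e + ξ' e)) (ξ f), lt_min (by linarith) hf0,
        by linarith [min_le_left (c e - (ξ e + ξ' e)) (ξ f)], fun _ => min_le_right _ _⟩
  obtain ⟨ε, hε, hεδ, hεq⟩ := exists_pos_le_of_finite
    (p := fun q : G.Path s t => e ∉ q.1.edges ∧ (f = e ∨ f ∈ q.1.edges))
    (g := fun q => weight (deviationCost P ξ c) q.1 - weight (deviationCost P ξ c) P)
    (fun q hq => sub_pos.2 (hslack q.1 hq.1 hq.2)) hδ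
  have hfeas := hLP.1.pushFun_left he hf hε.le (by linarith) (fun h => hεδ.trans (hδf h))
    fun q hq heq hfq => by
      have := hεq ⟨q, hq⟩ ⟨heq, hfq⟩
      have := sum_deviationCost_sub_weight (ξ := ξ) (c := c) hP q
      rw [← weight_eq_sum_toFinset _ hq] at this
      linarith
  rcases hef with rfl | ⟨-, hord⟩
  · have := hLP.2 _ _ hfeas
    simp only [Obj2, sum_pushFun, if_pos (List.mem_toFinset.2 he), ne_eq, not_true_eq_false,
      and_false, if_false, sub_zero] at this
    linarith
  · exact hPL.1 e he f hf hord ε hε hfeas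

lemma cost_union_sdiff_add_cost_le (hc : ∀ g, 0 ≤ c g) {F A D B : Finset (Sym2 V)}
    (hD : D ⊆ F) (hB : B ⊆ F) : cost c ((F ∪ A) \ D) + cost c D ≤ cost c F + cost c (A \ B) := by
  have hsplit : cost c (F ∪ A) = cost c F + cost c (A \ F) := by
    rw [cost, cost, cost, ← Finset.sum_union Finset.disjoint_sdiff,
      Finset.union_sdiff_self_eq_union]
  have hmono : cost c (A \ F) ≤ cost c (A \ B) :=
    Finset.sum_le_sum_of_subset_of_nonneg (Finset.sdiff_subset_sdiff le_rfl hB)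
      fun g _ _ => hc g
  have := Finset.sum_sdiff (f := c) (hD.trans Finset.subset_union_left : D ⊆ F ∪ A)
  simp only [cost] at *
  linarith

lemma Feasible2.cost_reroute_lt (h : Feasible2 G c P Q ξ ξ') (hc : ∀ g, 0 ≤ c g)
    (hP : P.IsPath) {M : Finset (Sym2 V)} {ρ : G.Walk s t}
    (hρw : weight (deviationCost P ξ c) ρ ≤ weight (deviationCost P ξ c) P)
    (hρM : ∀ g ∈ M, 0 < ξ g → g ∈ ρ.edges) {e : Sym2 V} (heP : e ∈ P.edges)
    (heρ : e ∉ ρ.edges) (heM : e ∉ M) (hunpaid : ξ e + ξ' e < c e) :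
    cost c ((P.edges.toFinset ∪ Q.edges.toFinset ∪ ρ.edges.toFinset) \
        ((P.edges.toFinset \ ρ.edges.toFinset) \ M)) <
      cost c (P.edges.toFinset ∪ Q.edges.toFinset) := by
  obtain ⟨hξ, hξ', -, -, hcap, -, -⟩ := h
  set Pf := P.edges.toFinset
  set ρf := ρ.edges.toFinset
  set D := (Pf \ ρf) \ M
  have hnew : ∑ g ∈ ρf \ Pf, c g ≤ ∑ g ∈ Pf \ ρf, ξ g := by
    have := sum_deviationCost_sub_weight (ξ := ξ) (c := c) hP ρ
    linarith [sum_toFinset_le_weight (deviationCost_nonneg (P := P) hξ hc) ρ]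
  have hdropped : ∑ g ∈ Pf \ ρf, ξ g = ∑ g ∈ D, ξ g := by
    rw [← Finset.sum_inter_add_sum_sdiff (Pf \ ρf) M, add_eq_right]
    refine Finset.sum_eq_zero fun g hg => ?_
    obtain ⟨hgPρ, hgM⟩ := Finset.mem_inter.1 hg
    exact le_antisymm (not_lt.1 fun hpos => (Finset.mem_sdiff.1 hgPρ).2
      (List.mem_toFinset.2 (hρM g hgM hpos))) (hξ g)
  have heD : e ∈ D := by simp [D, Pf, ρf, heP, heρ, heM]
  have hgap : c e - ξ e ≤ ∑ g ∈ D, (c g - ξ g) :=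
    Finset.single_le_sum (f := fun g => c g - ξ g) (fun g hg => by
      have := hcap g (Finset.mem_union_left _ (Finset.mem_sdiff.1 (Finset.mem_sdiff.1 hg).1).1)
      linarith [hξ' g]) heD
  have := cost_union_sdiff_add_cost_le hc (F := Pf ∪ Q.edges.toFinset) (A := ρf) (D := D)
    ((Finset.sdiff_subset.trans Finset.sdiff_subset).trans Finset.subset_union_left)
    Finset.subset_union_left
  rw [Finset.sum_sub_distrib] at hgap
  simp only [cost] at this ⊢
  linarith [hξ' e]

lemma paid_of_mem_left [Fintype V] (hc : ∀ g, 0 ≤ c g) {a b : V} {L : G.Walk s a}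
    {M : G.Walk a b} {R : G.Walk b t} (hP : ((L.append M).append R).IsPath)
    (hmeet : ∀ g ∈ ((L.append M).append R).edges, g ∈ Q.edges → g ∈ M.edges)
    (hOpt : IsOptimalSteinerForest G s t s' t' c
      (((L.append M).append R).edges.toFinset ∪ Q.edges.toFinset))
    (hLP : Optimal2 G c ((L.append M).append R) Q ξ ξ')
    {ord : List (Sym2 V)} (hPL : PushedLeft G c ((L.append M).append R) Q ord ξ ξ')
    {e : Sym2 V} (he : e ∈ L.edges) (hord : ∀ g ∈ M.edges, ord.idxOf e < ord.idxOf g) :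
    Paid c ξ ξ' e := by
  set P := (L.append M).append R
  have heP : e ∈ P.edges := by simp [P, Walk.edges_append, he]
  have heM : e ∉ M.edges := notMem_edges_of_isPath_append hP.of_append_left he
  have heR : e ∉ R.edges := notMem_edges_of_isPath_append hP (by simp [Walk.edges_append, he])
  by_contra hunpaid
  have hlt : ξ e + ξ' e < c e :=
    (hLP.1.2.2.2.2.1 e (Finset.mem_union_left _ (List.mem_toFinset.2 heP))).lt_of_ne hunpaid
  obtain ⟨ρ, hρw, heρ, hρM⟩ := exists_avoiding_covering_weight_le (p := fun g => 0 < ξ g) L M R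
    (hLP.1.weight_le hc hP) heM heR
    (by
      obtain ⟨q, hq, -, hqw⟩ := exists_avoiding_weight_le hLP hPL hP heP hlt heP (Or.inl rfl)
      exact ⟨q, hq, hqw⟩)
    (fun g hgM hg => by
      have hgP : g ∈ P.edges := by simp [P, Walk.edges_append, hgM]
      obtain ⟨q, hq, hgq, hqw⟩ :=
        exists_avoiding_weight_le hLP hPL hP heP hlt hgP (Or.inr ⟨hg, hord g hgM⟩)
      exact ⟨q, hq, hgq.resolve_left (ne_of_mem_of_not_mem hgM heM), hqw⟩)
  have hcheaper := hLP.1.cost_reroute_lt hc hP (M := M.edges.toFinset) hρw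
    (fun g hg hpos => hρM g (List.mem_toFinset.1 hg) hpos) heP heρ (by simpa using heM) hlt
  refine hcheaper.not_ge (hOpt.cost_le hc ?_ ⟨ρ, fun g hg => ?_⟩ ⟨Q, fun g hg => ?_⟩)
  · intro g hg
    simp only [Finset.coe_sdiff, Finset.coe_union, Set.mem_sdiff, Set.mem_union, Finset.mem_coe,
      List.mem_toFinset] at hg
    obtain ⟨(hgP | hgQ) | hgρ, -⟩ := hg
    exacts [P.edges_subset_edgeSet hgP, Q.edges_subset_edgeSet hgQ, ρ.edges_subset_edgeSet hgρ]
  · simp [hg]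
  · simp only [Finset.mem_sdiff, Finset.mem_union, List.mem_toFinset]
    exact ⟨Or.inl (Or.inr hg), fun hD => hD.2 (hmeet g hD.1.1 hg)⟩

end LP

variable {V : Type*} [DecidableEq V]

theorem first_unpaid_not_in_left_part_general [Fintype V]
    {a b : V} (G : SimpleGraph V) (s₁ t₁ s₂ t₂ : V) (c : Sym2 V → ℝ)
    (hc : ∀ e, 0 ≤ c e)
    (L₁ : G.Walk s₁ a) (M : G.Walk a b) (R₁ : G.Walk b t₁)
    (L₂ : G.Walk s₂ a) (R₂ : G.Walk b t₂)
    (hP₁ : ((L₁.append M).append R₁).IsPath)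
    (hP₂ : ((L₂.append M).append R₂).IsPath)
    (hmeet : ∀ e, e ∈ ((L₁.append M).append R₁).edges →
      e ∈ ((L₂.append M).append R₂).edges → e ∈ M.edges)
    (hOpt : IsOptimalSteinerForest G s₁ t₁ s₂ t₂ c
      (((L₁.append M).append R₁).edges.toFinset ∪ ((L₂.append M).append R₂).edges.toFinset))
    (ξ₁ ξ₂ : Sym2 V → ℝ)
    (hLP : Optimal2 G c ((L₁.append M).append R₁) ((L₂.append M).append R₂) ξ₁ ξ₂)
    (hPL : PushedLeft G c ((L₁.append M).append R₁) ((L₂.append M).append R₂)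
      (ordList G L₁ M R₁ L₂ R₂) ξ₁ ξ₂)
    (k : ℕ)
    (hk : FirstUnpaid c (ordList G L₁ M R₁ L₂ R₂) ξ₁ ξ₂ k) :
    L₁.edges.length + L₂.edges.length ≤ k := by
  by_contra! hleft
  obtain ⟨hklen, hunpaid, -⟩ := hk
  have hord_eq : ordList G L₁ M R₁ L₂ R₂ =
      (L₁.edges ++ L₂.edges) ++ (M.edges ++ R₁.edges ++ R₂.edges) := by
    simp [ordList]
  obtain ⟨e, he⟩ : ∃ e, (ordList G L₁ M R₁ L₂ R₂)[k]? = some e :=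
    ⟨_, List.getElem?_eq_getElem hklen⟩
  have heL : e ∈ L₁.edges ++ L₂.edges := by
    rw [hord_eq, List.getElem?_append_left (by rwa [List.length_append])] at he
    exact List.mem_of_getElem? he
  have hord : ∀ g ∈ M.edges,
      (ordList G L₁ M R₁ L₂ R₂).idxOf e < (ordList G L₁ M R₁ L₂ R₂).idxOf g := by
    intro g hg
    rw [hord_eq]
    refine idxOf_append_lt_of_mem_of_notMem heL ?_
    rw [List.mem_append, not_or]
    exact ⟨fun h => notMem_edges_of_isPath_append hP₁.of_append_left h hg,
      fun h => notMem_edges_of_isPath_append hP₂.of_append_left h hg⟩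
  refine hunpaid e he ?_
  rcases List.mem_append.1 heL with he | he
  · exact paid_of_mem_left hc hP₁ hmeet hOpt hLP hPL he hord
  · have := paid_of_mem_left hc hP₂ (fun g h₂ h₁ => hmeet g h₁ h₂)
      (by rw [Finset.union_comm]; exact hOpt.swap) hLP.swap hPL.swap he hord
    unfold Paid at this ⊢
    linarith

/-- Case L.  Let `F` be an optimal Steiner forest whose two
paths `P₁ = L₁ ++ M ++ R₁` and `P₂ = L₂ ++ M ++ R₂` meet exactly in the
nonempty middle part `M`, let `(ξ₁, ξ₂)` be a pushed-to-the-left optimal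
solution of LP(F), and let `k` be the position of the first edge of `F` (in the
ordering `L₁, L₂, M, R₁, R₂`) that is not completely paid.  Then this edge does
not lie in the left part, i.e. `ord(e) > ℓ₁ + ℓ₂`. -/
theorem first_unpaid_not_in_left_part [Fintype V]
    {a b : V} (G : SimpleGraph V) (s₁ t₁ s₂ t₂ : V) (c : Sym2 V → ℝ)
    (hc : ∀ e, 0 ≤ c e)
    (L₁ : G.Walk s₁ a) (M : G.Walk a b) (R₁ : G.Walk b t₁)
    (L₂ : G.Walk s₂ a) (R₂ : G.Walk b t₂)
    (hP₁ : ((L₁.append M).append R₁).IsPath)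
    (hP₂ : ((L₂.append M).append R₂).IsPath)
    (hM_ne : M.edges ≠ [])
    (hmeet : ∀ e, e ∈ ((L₁.append M).append R₁).edges →
      e ∈ ((L₂.append M).append R₂).edges → e ∈ M.edges)
    (hOpt : IsOptimalSteinerForest G s₁ t₁ s₂ t₂ c
      (((L₁.append M).append R₁).edges.toFinset ∪ ((L₂.append M).append R₂).edges.toFinset))
    (ξ₁ ξ₂ : Sym2 V → ℝ)
    (hLP : Optimal2 G c ((L₁.append M).append R₁) ((L₂.append M).append R₂) ξ₁ ξ₂)
    (hPL : PushedLeft G c ((L₁.append M).append R₁) ((L₂.append M).append R₂)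
      (ordList G L₁ M R₁ L₂ R₂) ξ₁ ξ₂)
    (k : ℕ)
    (hk : FirstUnpaid c (ordList G L₁ M R₁ L₂ R₂) ξ₁ ξ₂ k) :
    L₁.edges.length + L₂.edges.length ≤ k :=
  first_unpaid_not_in_left_part_general G s₁ t₁ s₂ t₂ c hc L₁ M R₁ L₂ R₂ hP₁ hP₂ hmeet hOpt ξ₁ ξ₂
    hLP hPL k hk

end NDG
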